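/- arXiv:1810.02532 — 3 statements merged into one kernel-verified Lean document; each statement's English description precedes it below -/
import Mathlib

section
/- Let Ã be an n×n Hermitian matrix of the 3×3 block form Ã = [[Λ̂₁, 0, R₁*],[0, Λ̂₂, R₂*],[R₁, R₂, A₃]] as described. Suppose X̃₁ ∈ ℂ^{n×k₁} has orthonormal columns and satisfies ÃX̃₁ = X̃₁Λ₁ for a real diagonal k₁×k₁ matrix Λ₁, with rows partitioned conformally as X̃₁ = (W; Y; Z). If Gap > 0, then ‖Z‖_F ≤ ‖R‖_F / Gap. -/
open Matrix
open scoped Matrix.Norms.L2Operator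

/-- The Frobenius norm of a complex matrix, written explicitly. -/
noncomputable def frobNorm {α β : Type*} [Fintype α] [Fintype β] (M : Matrix α β ℂ) : ℝ :=
  Real.sqrt (∑ i, ∑ j, ‖M i j‖ ^ 2)

/-!
The bottom block row of `Ã X̃₁ = X̃₁ Λ₁` is the Sylvester equation `R W + A₃ Z = Z Λ₁`.
In an eigenbasis `U` of `A₃` it decouples entrywise into
`(Uᴴ R W)ᵢⱼ = (Uᴴ Z)ᵢⱼ (λⱼ - μᵢ)`, whence `Gap ‖Z‖_F ≤ ‖R W‖_F`. Finally `‖R W‖_F ≤ ‖R‖_F`,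
since `R W = [R 0] X̃₁` and right multiplication by a matrix with orthonormal columns
cannot increase the Frobenius norm.
-/

section FrobeniusNorm

variable {m n p : Type*} [Fintype m] [Fintype n] [Fintype p]

lemma frobNorm_nonneg (M : Matrix m n ℂ) : 0 ≤ frobNorm M := Real.sqrt_nonneg _

lemma frobNorm_sq (M : Matrix m n ℂ) : frobNorm M ^ 2 = ∑ i, ∑ j, ‖M i j‖ ^ 2 :=
  Real.sq_sqrt (by positivity)

lemma frobNorm_le_frobNorm_iff_sq_le {α β γ δ : Type*} [Fintype α] [Fintype β] [Fintype γ]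
    [Fintype δ] {M : Matrix α β ℂ} {N : Matrix γ δ ℂ} :
    frobNorm M ≤ frobNorm N ↔ frobNorm M ^ 2 ≤ frobNorm N ^ 2 :=
  (pow_le_pow_iff_left₀ (frobNorm_nonneg M) (frobNorm_nonneg N) two_ne_zero).symm

lemma frobNorm_sq_eq_re_trace (M : Matrix m n ℂ) : frobNorm M ^ 2 = (Mᴴ * M).trace.re := by
  rw [frobNorm_sq, Finset.sum_comm]
  simp [trace, mul_apply, Complex.re_sum, Complex.sq_norm, Complex.normSq_apply]

lemma frobNorm_mul_sq_eq_re_trace (T : Matrix m n ℂ) (P : Matrix n p ℂ) :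
    frobNorm (T * P) ^ 2 = (Tᴴ * T * (P * Pᴴ)).trace.re := by
  rw [frobNorm_sq_eq_re_trace, conjTranspose_mul, Matrix.mul_assoc, trace_mul_comm]
  simp only [Matrix.mul_assoc]

lemma frobNorm_isometry_mul [DecidableEq n] {U : Matrix m n ℂ} (hU : Uᴴ * U = 1)
    (M : Matrix n p ℂ) :
    frobNorm (U * M) = frobNorm M := by
  rw [← Real.sqrt_sq (frobNorm_nonneg (U * M)), ← Real.sqrt_sq (frobNorm_nonneg M),
    frobNorm_sq_eq_re_trace, frobNorm_sq_eq_re_trace, conjTranspose_mul, Matrix.mul_assoc,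
    ← Matrix.mul_assoc Uᴴ, hU, Matrix.one_mul]

lemma frobNorm_sq_eq_mul_isometry_add_mul_compl [DecidableEq n] [DecidableEq p]
    {X : Matrix n p ℂ} (hX : Xᴴ * X = 1) (T : Matrix m n ℂ) :
    frobNorm T ^ 2 = frobNorm (T * X) ^ 2 + frobNorm (T * (1 - X * Xᴴ)) ^ 2 := by
  have hQ : (1 - X * Xᴴ) * (1 - X * Xᴴ)ᴴ = 1 - X * Xᴴ := by
    simp only [conjTranspose_sub, conjTranspose_one, conjTranspose_mul,
      conjTranspose_conjTranspose, Matrix.mul_sub, Matrix.sub_mul, Matrix.one_mul,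
      Matrix.mul_one, Matrix.mul_assoc, ← Matrix.mul_assoc Xᴴ X, hX]
    abel
  rw [frobNorm_mul_sq_eq_re_trace, frobNorm_mul_sq_eq_re_trace, hQ, ← Complex.add_re,
    ← trace_add, ← Matrix.mul_add, add_sub_cancel, Matrix.mul_one, frobNorm_sq_eq_re_trace]

lemma frobNorm_mul_isometry_le [DecidableEq p] {X : Matrix n p ℂ} (hX : Xᴴ * X = 1)
    (T : Matrix m n ℂ) :
    frobNorm (T * X) ≤ frobNorm T := by
  classical
  rw [frobNorm_le_frobNorm_iff_sq_le, frobNorm_sq_eq_mul_isometry_add_mul_compl hX T]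
  exact le_add_of_nonneg_right (sq_nonneg _)

lemma frobNorm_fromCols_zero {n' : Type*} [Fintype n'] (S : Matrix m n ℂ) :
    frobNorm (fromCols S (0 : Matrix m n' ℂ)) = frobNorm S := by
  simp [frobNorm, Fintype.sum_sum_type]

lemma frobNorm_mul_toRows₁_le {n' : Type*} [Fintype n'] [DecidableEq p] (S : Matrix m n ℂ)
    {X : Matrix (n ⊕ n') p ℂ} (hX : Xᴴ * X = 1) :
    frobNorm (S * X.toRows₁) ≤ frobNorm S :=
  calc frobNorm (S * X.toRows₁)
      = frobNorm (fromCols S (0 : Matrix m n' ℂ) * X) := by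
        conv_rhs => rw [← fromRows_toRows X]
        rw [fromCols_mul_fromRows, Matrix.zero_mul, add_zero]
    _ ≤ frobNorm (fromCols S (0 : Matrix m n' ℂ)) := frobNorm_mul_isometry_le hX _
    _ = frobNorm S := frobNorm_fromCols_zero S

end FrobeniusNorm

section Sylvester

variable {m n : Type*} [Fintype m] [Fintype n] [DecidableEq m] [DecidableEq n]

lemma mul_frobNorm_le_of_diagonal_sylvester {C Y : Matrix m n ℂ} {d : m → ℂ} {l : n → ℂ}
    {δ : ℝ} (hδ : 0 ≤ δ) (hsep : ∀ i j, δ ≤ ‖l j - d i‖)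
    (h : C + diagonal d * Y = Y * diagonal l) :
    δ * frobNorm Y ≤ frobNorm C := by
  have hentry : ∀ i j, C i j = Y i j * (l j - d i) := fun i j => by
    have hij : (C + diagonal d * Y) i j = (Y * diagonal l) i j := by rw [h]
    rw [Matrix.add_apply, diagonal_mul, mul_diagonal] at hij
    linear_combination hij
  rw [← pow_le_pow_iff_left₀ (mul_nonneg hδ (frobNorm_nonneg Y)) (frobNorm_nonneg C)
    two_ne_zero, mul_pow, frobNorm_sq, frobNorm_sq, Finset.mul_sum]
  gcongr with i _
  rw [Finset.mul_sum]
  gcongr with j _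
  rw [← mul_pow, hentry, norm_mul, mul_comm δ]
  exact pow_le_pow_left₀ (mul_nonneg (norm_nonneg _) hδ)
    (mul_le_mul_of_nonneg_left (hsep i j) (norm_nonneg _)) 2

lemma mul_frobNorm_le_of_sylvester {A : Matrix m m ℂ} (hA : A.IsHermitian)
    {C Z : Matrix m n ℂ} {l : n → ℝ} {δ : ℝ} (hδ : 0 ≤ δ)
    (hsep : ∀ i j, δ ≤ |l j - hA.eigenvalues i|)
    (h : C + A * Z = Z * diagonal fun j => (l j : ℂ)) :
    δ * frobNorm Z ≤ frobNorm C := by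
  have hconj := hA.conjStarAlgAut_star_eigenvectorUnitary
  rw [Unitary.conjStarAlgAut_star_apply] at hconj
  have hmem := hA.eigenvectorUnitary.2
  generalize (hA.eigenvectorUnitary : Matrix m m ℂ) = U at hconj hmem
  have hU : Uᴴᴴ * Uᴴ = 1 := by
    rw [conjTranspose_conjTranspose, ← star_eq_conjTranspose]
    exact Unitary.mul_star_self_of_mem hmem
  have hdiag : Uᴴ * A = diagonal (RCLike.ofReal ∘ hA.eigenvalues) * Uᴴ := by
    rw [← hconj, Matrix.mul_assoc _ U, ← star_eq_conjTranspose,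
      Unitary.mul_star_self_of_mem hmem, Matrix.mul_one]
  have hsylv : Uᴴ * C + Uᴴ * A * Z = Uᴴ * Z * diagonal fun j => (l j : ℂ) := by
    rw [Matrix.mul_assoc, ← Matrix.mul_add, h, Matrix.mul_assoc]
  rw [hdiag, Matrix.mul_assoc] at hsylv
  rw [← frobNorm_isometry_mul hU Z, ← frobNorm_isometry_mul hU C]
  refine mul_frobNorm_le_of_diagonal_sylvester hδ (fun i j => ?_) hsylv
  simpa [← Complex.ofReal_sub, Complex.norm_real] using hsep i j

end Sylvester

theorem subspace_Z_bound_frobenius_general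
    {k n k₁ : ℕ}
    (lamhat1 : Fin k₁ → ℝ) (lamhat2 : Fin (k - k₁) → ℝ)
    (R : Matrix (Fin (n - k)) (Fin k₁ ⊕ Fin (k - k₁)) ℂ)
    (A3 : Matrix (Fin (n - k)) (Fin (n - k)) ℂ) (hA3 : A3.IsHermitian)
    (X : Matrix ((Fin k₁ ⊕ Fin (k - k₁)) ⊕ Fin (n - k)) (Fin k₁) ℂ)
    (hX : Xᴴ * X = 1)
    (Lam1 : Fin k₁ → ℝ)
    (heig :
      (Matrix.fromBlocks
          (Matrix.diagonal fun i => Complex.ofReal (Sum.elim lamhat1 lamhat2 i))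
          Rᴴ R A3) * X = X * Matrix.diagonal fun i => Complex.ofReal (Lam1 i))
    (Gap : ℝ)
    (hGapDef : Gap = ⨅ i, ⨅ j, |Lam1 i - hA3.eigenvalues j|)
    (hGap : 0 < Gap) :
    frobNorm (X.submatrix Sum.inr id) ≤ frobNorm R / Gap := by
  have hsep : ∀ j i, Gap ≤ |Lam1 i - hA3.eigenvalues j| := fun j i => hGapDef ▸
    (ciInf_le (Set.finite_range _).bddBelow i).trans (ciInf_le (Set.finite_range _).bddBelow j)
  have hbottom :
      R * X.toRows₁ + A3 * X.toRows₂ = X.toRows₂ * diagonal fun i => (Lam1 i : ℂ) := by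
    have hrows := congrArg toRows₂ heig
    rwa [← fromRows_toRows X, fromBlocks_mul_fromRows, fromRows_mul, toRows₂_fromRows,
      toRows₂_fromRows] at hrows
  rw [le_div_iff₀ hGap, mul_comm]
  exact (mul_frobNorm_le_of_sylvester hA3 hGap.le hsep hbottom).trans
    (frobNorm_mul_toRows₁_le R hX)

/-- Generalized Davis–Kahan `sin θ` bound (eq. (5.7) of the paper):
if `Gap > 0`, then `‖Z‖_F ≤ ‖R‖_F/Gap`. -/
theorem subspace_Z_bound_frobenius
    {k n k₁ : ℕ} (hk : 2 ≤ k) (hkn : k ≤ n) (hk₁ : 1 ≤ k₁) (hk₁k : k₁ < k)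
    (lamhat1 : Fin k₁ → ℝ) (lamhat2 : Fin (k - k₁) → ℝ)
    (R : Matrix (Fin (n - k)) (Fin k₁ ⊕ Fin (k - k₁)) ℂ)
    (A3 : Matrix (Fin (n - k)) (Fin (n - k)) ℂ) (hA3 : A3.IsHermitian)
    (X : Matrix ((Fin k₁ ⊕ Fin (k - k₁)) ⊕ Fin (n - k)) (Fin k₁) ℂ)
    (hX : Xᴴ * X = 1)
    (Lam1 : Fin k₁ → ℝ)
    (heig :
      (Matrix.fromBlocks
          (Matrix.diagonal fun i => Complex.ofReal (Sum.elim lamhat1 lamhat2 i))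
          Rᴴ R A3) * X = X * Matrix.diagonal fun i => Complex.ofReal (Lam1 i))
    (Gap : ℝ)
    (hGapDef : Gap = ⨅ i, ⨅ j, |Lam1 i - hA3.eigenvalues j|)
    (hGap : 0 < Gap) :
    frobNorm (X.submatrix Sum.inr id) ≤ frobNorm R / Gap :=
  subspace_Z_bound_frobenius_general lamhat1 lamhat2 R A3 hA3 X hX Lam1 heig Gap hGapDef hGap
end

section
/- Let Ã ∈ ℂ^{m×n} be of the 3×3 block form Ã = [[Σ̂₁, 0, R₁],[0, Σ̂₂, R₂],[S₁, S₂, A₃]] as described, and let (Σ₁, Ũ₁, Ṽ₁) be exact singular triplets: ÃṼ₁ = Ũ₁Σ₁ and Ã*Ũ₁ = Ṽ₁Σ₁, with Ũ₁, Ṽ₁ having orthonormal columns and Σ₁ real diagonal with positive diagonal entries. Partition Ũ₁ = (Ũ₁₁; Ũ₂₁; Ũ₃₁) and Ṽ₁ = (Ṽ₁₁; Ṽ₂₁; Ṽ₃₁) conformally with the block rows and columns of Ã. Assume Gap := σ_min(Σ₁) − ‖A₃‖ > 0 and gap := σ_min(Σ₁) − ‖Σ̂₂‖ > 0. Then max(‖[Ũ₂₁;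 Ũ₃₁]‖, ‖[Ṽ₂₁; Ṽ₃₁]‖) ≤ (max(‖R‖, ‖S‖)/Gap) · (1 + max(‖R₂‖, ‖S₂‖)/gap). -/
/-!
The rows of `ÃṼ₁ = Ũ₁Σ₁` and `Ã*Ũ₁ = Ṽ₁Σ₁` in the last block give
`Ũ₃₁Σ₁ = S (Ṽ₁₁; Ṽ₂₁) + A₃ Ṽ₃₁` and `Ṽ₃₁Σ₁ = R* (Ũ₁₁; Ũ₂₁) + A₃* Ũ₃₁`. Since
`‖X Σ₁‖ ≥ σ_min(Σ₁) ‖X‖` and the top blocks of `Ũ₁`, `Ṽ₁` have norm at most one, taking norms gives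
`Gap · max(‖Ũ₃₁‖, ‖Ṽ₃₁‖) ≤ max(‖R‖, ‖S‖)`. Because of the zero blocks of `Ã`, the rows in the
middle block, `Ũ₂₁Σ₁ = Σ̂₂ Ṽ₂₁ + R₂ Ṽ₃₁` and `Ṽ₂₁Σ₁ = Σ̂₂* Ũ₂₁ + S₂* Ũ₃₁`, are coupled in the same
way, so `gap · max(‖Ũ₂₁‖, ‖Ṽ₂₁‖) ≤ max(‖R₂‖, ‖S₂‖) · max(‖Ũ₃₁‖, ‖Ṽ₃₁‖)`. The claim follows from
`‖[Ũ₂₁; Ũ₃₁]‖ ≤ ‖Ũ₂₁‖ + ‖Ũ₃₁‖` (and likewise for `Ṽ`) by adding the two estimates.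
-/

open Matrix
open scoped Matrix.Norms.L2Operator

lemma sub_mul_max_le_max_of_le_add_mul {σ β x y e₁ e₂ : ℝ} (hβ : 0 ≤ β)
    (hx : σ * x ≤ e₁ + β * y) (hy : σ * y ≤ e₂ + β * x) : (σ - β) * max x y ≤ max e₁ e₂ := by
  rcases le_total y x with h | h
  · rw [max_eq_left h]
    nlinarith [le_max_left e₁ e₂, mul_le_mul_of_nonneg_left h hβ]
  · rw [max_eq_right h]
    nlinarith [le_max_right e₁ e₂, mul_le_mul_of_nonneg_left h hβ]

lemma add_le_div_mul_one_add_div {s t ε δ G g : ℝ} (hG : 0 < G) (hg : 0 < g) (hδ : 0 ≤ δ)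
    (ht : G * t ≤ ε) (hs : g * s ≤ δ * t) : s + t ≤ ε / G * (1 + δ / g) := by
  have ht' : t ≤ ε / G := (le_div_iff₀' hG).2 ht
  have hs' : s ≤ δ * (ε / G) / g :=
    (le_div_iff₀' hg).2 (hs.trans (mul_le_mul_of_nonneg_left ht' hδ))
  calc s + t ≤ δ * (ε / G) / g + ε / G := add_le_add hs' ht'
    _ = ε / G * (1 + δ / g) := by ring

namespace Matrix

section Partition

variable {R : Type*} {m₁ m₂ n₁ n₂ l k : Type*}

lemma toRows₁_mul [Semiring R] [Fintype l] (A : Matrix (m₁ ⊕ m₂) l R) (B : Matrix l k R) :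
    (A * B).toRows₁ = A.toRows₁ * B := rfl

lemma toRows₂_mul [Semiring R] [Fintype l] (A : Matrix (m₁ ⊕ m₂) l R) (B : Matrix l k R) :
    (A * B).toRows₂ = A.toRows₂ * B := rfl

lemma toRows₂_add [Add R] (A B : Matrix (m₁ ⊕ m₂) l R) :
    (A + B).toRows₂ = A.toRows₂ + B.toRows₂ := rfl

lemma toRows₂_conjTranspose [Star R] (A : Matrix l (n₁ ⊕ n₂) R) :
    Aᴴ.toRows₂ = A.toCols₂ᴴ := rfl

lemma toRows₁_fromBlocks_mul [Semiring R] [Fintype n₁] [Fintype n₂] (A : Matrix m₁ n₁ R)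
    (B : Matrix m₁ n₂ R) (C : Matrix m₂ n₁ R) (D : Matrix m₂ n₂ R) (X : Matrix (n₁ ⊕ n₂) k R) :
    (fromBlocks A B C D * X).toRows₁ = A * X.toRows₁ + B * X.toRows₂ := by
  rw [← fromRows_toRows X, fromBlocks_mul_fromRows]; rfl

lemma toRows₂_fromBlocks_mul [Semiring R] [Fintype n₁] [Fintype n₂] (A : Matrix m₁ n₁ R)
    (B : Matrix m₁ n₂ R) (C : Matrix m₂ n₁ R) (D : Matrix m₂ n₂ R) (X : Matrix (n₁ ⊕ n₂) k R) :
    (fromBlocks A B C D * X).toRows₂ = C * X.toRows₁ + D * X.toRows₂ := by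
  rw [← fromRows_toRows X, fromBlocks_mul_fromRows]; rfl

lemma submatrix_sumElim_inl_inr_eq_fromRows {m₃ : Type*} (A : Matrix ((m₁ ⊕ m₂) ⊕ m₃) l R) :
    A.submatrix (Sum.elim (fun i => Sum.inl (Sum.inr i)) Sum.inr) id =
      fromRows A.toRows₁.toRows₂ A.toRows₂ := by
  ext (i | i) j <;> rfl

end Partition

section L2OpNorm

variable {𝕜 : Type*} [RCLike 𝕜] {m₁ m₂ n k : Type*} [Fintype m₁] [Fintype m₂] [Fintype n]
  [Fintype k]

lemma l2_opNorm_le_one_of_conjTranspose_mul_self_eq_one [DecidableEq k] {A : Matrix n k 𝕜}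
    (hA : Aᴴ * A = 1) : ‖A‖ ≤ 1 := by
  have hone : ‖(1 : Matrix k k 𝕜)‖ ≤ 1 := by
    rw [← diagonal_one, l2_opNorm_diagonal]
    exact (pi_norm_le_iff_of_nonneg zero_le_one).2 fun _ => by simp
  have hsq : ‖A‖ * ‖A‖ ≤ 1 := by rw [← l2_opNorm_conjTranspose_mul_self, hA]; exact hone
  nlinarith [norm_nonneg A]

lemma l2_opNorm_fromRows_one_zero_le [DecidableEq m₁] :
    ‖fromRows (1 : Matrix m₁ m₁ 𝕜) (0 : Matrix m₂ m₁ 𝕜)‖ ≤ 1 :=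
  l2_opNorm_le_one_of_conjTranspose_mul_self_eq_one <| by
    simp [conjTranspose_fromRows_eq_fromCols_conjTranspose, fromCols_mul_fromRows]

lemma l2_opNorm_fromRows_zero_one_le [DecidableEq m₂] :
    ‖fromRows (0 : Matrix m₁ m₂ 𝕜) (1 : Matrix m₂ m₂ 𝕜)‖ ≤ 1 :=
  l2_opNorm_le_one_of_conjTranspose_mul_self_eq_one <| by
    simp [conjTranspose_fromRows_eq_fromCols_conjTranspose, fromCols_mul_fromRows]

lemma l2_opNorm_toRows₁_le [DecidableEq m₁] [DecidableEq m₂] [DecidableEq n]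
    (A : Matrix (m₁ ⊕ m₂) n 𝕜) : ‖A.toRows₁‖ ≤ ‖A‖ := by
  have hA : A.toRows₁ = (fromRows (1 : Matrix m₁ m₁ 𝕜) (0 : Matrix m₂ m₁ 𝕜))ᴴ * A := by
    rw [conjTranspose_fromRows_eq_fromCols_conjTranspose, conjTranspose_one, conjTranspose_zero]
    conv_rhs => rw [← fromRows_toRows A]
    rw [fromCols_mul_fromRows, Matrix.one_mul, Matrix.zero_mul, add_zero]
  calc ‖A.toRows₁‖ ≤ ‖(fromRows (1 : Matrix m₁ m₁ 𝕜) (0 : Matrix m₂ m₁ 𝕜))ᴴ‖ * ‖A‖ :=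
        hA ▸ l2_opNorm_mul _ _
    _ ≤ 1 * ‖A‖ := by
        rw [l2_opNorm_conjTranspose]; gcongr; exact l2_opNorm_fromRows_one_zero_le
    _ = ‖A‖ := one_mul _

lemma l2_opNorm_fromRows_le [DecidableEq m₁] [DecidableEq m₂] [DecidableEq n]
    (A : Matrix m₁ n 𝕜) (B : Matrix m₂ n 𝕜) : ‖fromRows A B‖ ≤ ‖A‖ + ‖B‖ := by
  have hAB : fromRows A B =
      fromRows (1 : Matrix m₁ m₁ 𝕜) 0 * A + fromRows 0 (1 : Matrix m₂ m₂ 𝕜) * B := by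
    ext (i | i) j <;> simp
  calc ‖fromRows A B‖
      ≤ ‖fromRows (1 : Matrix m₁ m₁ 𝕜) 0‖ * ‖A‖ + ‖fromRows 0 (1 : Matrix m₂ m₂ 𝕜)‖ * ‖B‖ :=
        hAB ▸ (norm_add_le _ _).trans (add_le_add (l2_opNorm_mul _ _) (l2_opNorm_mul _ _))
    _ ≤ 1 * ‖A‖ + 1 * ‖B‖ := by
        gcongr
        exacts [l2_opNorm_fromRows_one_zero_le, l2_opNorm_fromRows_zero_one_le]
    _ = ‖A‖ + ‖B‖ := by ring

lemma max_l2_opNorm_fromRows_le {m₃ m₄ : Type*} [Fintype m₃] [Fintype m₄] [DecidableEq m₁]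
    [DecidableEq m₂] [DecidableEq m₃] [DecidableEq m₄] [DecidableEq n]
    (A : Matrix m₁ n 𝕜) (B : Matrix m₂ n 𝕜) (C : Matrix m₃ n 𝕜) (D : Matrix m₄ n 𝕜) :
    max ‖fromRows A B‖ ‖fromRows C D‖ ≤ max ‖A‖ ‖C‖ + max ‖B‖ ‖D‖ :=
  max_le ((l2_opNorm_fromRows_le A B).trans (add_le_add (le_max_left _ _) (le_max_left _ _)))
    ((l2_opNorm_fromRows_le C D).trans (add_le_add (le_max_right _ _) (le_max_right _ _)))

lemma mul_l2_opNorm_le_l2_opNorm_mul_diagonal [DecidableEq k] {c : ℝ} {d : k → 𝕜}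
    (hd : ∀ i, c ≤ ‖d i‖) (B : Matrix n k 𝕜) : c * ‖B‖ ≤ ‖B * diagonal d‖ := by
  rcases le_or_gt c 0 with hc | hc
  · exact (mul_nonpos_of_nonpos_of_nonneg hc (norm_nonneg _)).trans (norm_nonneg _)
  have hd₀ : ∀ i, d i ≠ 0 := fun i => norm_pos_iff.1 (hc.trans_le (hd i))
  have hB : B = B * diagonal d * diagonal d⁻¹ := by
    rw [Matrix.mul_assoc, diagonal_mul_diagonal]
    simp [hd₀]
  have hinv : ‖(diagonal d⁻¹ : Matrix k k 𝕜)‖ ≤ c⁻¹ := by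
    rw [l2_opNorm_diagonal]
    refine (pi_norm_le_iff_of_nonneg (inv_nonneg.2 hc.le)).2 fun i => ?_
    rw [Pi.inv_apply, norm_inv]
    exact inv_anti₀ hc (hd i)
  calc c * ‖B‖ ≤ c * (‖B * diagonal d‖ * c⁻¹) := by
        gcongr
        calc ‖B‖ ≤ ‖B * diagonal d‖ * ‖(diagonal d⁻¹ : Matrix k k 𝕜)‖ := by
              conv_lhs => rw [hB]
              exact l2_opNorm_mul _ _
          _ ≤ _ := by gcongr
    _ = ‖B * diagonal d‖ := by field_simp

lemma mul_l2_opNorm_le_of_add_mul_eq_mul_diagonal {p q r : Type*} [Fintype p] [Fintype q]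
    [Fintype r] [DecidableEq q] [DecidableEq r] [DecidableEq k] {c : ℝ} {d : k → 𝕜}
    (hd : ∀ i, c ≤ ‖d i‖) {X : Matrix p k 𝕜} {A : Matrix p q 𝕜} {B : Matrix q k 𝕜}
    {C : Matrix p r 𝕜} {D : Matrix r k 𝕜} (h : A * B + C * D = X * diagonal d) :
    c * ‖X‖ ≤ ‖A‖ * ‖B‖ + ‖C‖ * ‖D‖ :=
  calc c * ‖X‖ ≤ ‖X * diagonal d‖ := mul_l2_opNorm_le_l2_opNorm_mul_diagonal hd X
    _ = ‖A * B + C * D‖ := by rw [h]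
    _ ≤ ‖A‖ * ‖B‖ + ‖C‖ * ‖D‖ :=
        (norm_add_le _ _).trans (add_le_add (l2_opNorm_mul _ _) (l2_opNorm_mul _ _))

lemma sub_l2_opNorm_mul_max_le_of_coupled {p q r s : Type*} [Fintype p] [Fintype q]
    [Fintype r] [Fintype s] [DecidableEq p] [DecidableEq q] [DecidableEq r] [DecidableEq s]
    [DecidableEq k] {c : ℝ} {d : k → 𝕜} (hd : ∀ i, c ≤ ‖d i‖)
    {X : Matrix p k 𝕜} {Y : Matrix q k 𝕜} {M : Matrix p q 𝕜} {E : Matrix p r 𝕜}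
    {W : Matrix r k 𝕜} {F : Matrix s q 𝕜} {Z : Matrix s k 𝕜}
    (hX : E * W + M * Y = X * diagonal d) (hY : Fᴴ * Z + Mᴴ * X = Y * diagonal d) :
    (c - ‖M‖) * max ‖X‖ ‖Y‖ ≤ max ‖E‖ ‖F‖ * max ‖W‖ ‖Z‖ := by
  have hY' := mul_l2_opNorm_le_of_add_mul_eq_mul_diagonal hd hY
  rw [l2_opNorm_conjTranspose, l2_opNorm_conjTranspose] at hY'
  refine (sub_mul_max_le_max_of_le_add_mul (norm_nonneg M)
    (mul_l2_opNorm_le_of_add_mul_eq_mul_diagonal hd hX) hY').trans (max_le ?_ ?_)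
  · exact mul_le_mul (le_max_left _ _) (le_max_left _ _) (norm_nonneg _)
      ((norm_nonneg _).trans (le_max_left _ _))
  · exact mul_le_mul (le_max_right _ _) (le_max_right _ _) (norm_nonneg _)
      ((norm_nonneg _).trans (le_max_left _ _))

end L2OpNorm

end Matrix

theorem svd_subspace_bound_general
    {m n k₁ km kn : ℕ}
    (σ1hat : Fin k₁ → ℝ)
    (Sig2hat : Matrix (Fin (km - k₁)) (Fin (kn - k₁)) ℂ)
    (R : Matrix (Fin k₁ ⊕ Fin (km - k₁)) (Fin (n - kn)) ℂ)
    (S : Matrix (Fin (m - km)) (Fin k₁ ⊕ Fin (kn - k₁)) ℂ)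
    (A3 : Matrix (Fin (m - km)) (Fin (n - kn)) ℂ)
    (U : Matrix ((Fin k₁ ⊕ Fin (km - k₁)) ⊕ Fin (m - km)) (Fin k₁) ℂ)
    (V : Matrix ((Fin k₁ ⊕ Fin (kn - k₁)) ⊕ Fin (n - kn)) (Fin k₁) ℂ)
    (hU : Uᴴ * U = 1) (hV : Vᴴ * V = 1)
    (σ1 : Fin k₁ → ℝ)
    (hAV :
      (Matrix.fromBlocks
          (Matrix.fromBlocks (Matrix.diagonal fun i => Complex.ofReal (σ1hat i)) 0 0 Sig2hat)
          R S A3) * V = U * Matrix.diagonal fun i => Complex.ofReal (σ1 i))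
    (hAU :
      (Matrix.fromBlocks
          (Matrix.fromBlocks (Matrix.diagonal fun i => Complex.ofReal (σ1hat i)) 0 0 Sig2hat)
          R S A3)ᴴ * U = V * Matrix.diagonal fun i => Complex.ofReal (σ1 i))
    (Gap gap : ℝ)
    (hGapDef : Gap = (⨅ i, σ1 i) - ‖A3‖)
    (hgapDef : gap = (⨅ i, σ1 i) - ‖Sig2hat‖)
    (hGap : 0 < Gap) (hgap : 0 < gap) :
    max ‖U.submatrix (Sum.elim (fun i => Sum.inl (Sum.inr i)) Sum.inr) id‖
        ‖V.submatrix (Sum.elim (fun i => Sum.inl (Sum.inr i)) Sum.inr) id‖ ≤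
      (max ‖R‖ ‖S‖ / Gap) *
        (1 + max ‖R.submatrix Sum.inr id‖ ‖S.submatrix id Sum.inr‖ / gap) := by
  have hσ : ∀ i, (⨅ j, σ1 j) ≤ ‖(σ1 i : ℂ)‖ := fun i =>
    (ciInf_le (Finite.bddBelow_range σ1) i).trans (by simpa using le_abs_self (σ1 i))
  rw [fromBlocks_conjTranspose, fromBlocks_conjTranspose] at hAU
  have hAV₂ := congrArg toRows₂ hAV
  have hAU₂ := congrArg toRows₂ hAU
  have hAV₁₂ := congrArg (toRows₂ ∘ toRows₁) hAV
  have hAU₁₂ := congrArg (toRows₂ ∘ toRows₁) hAU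
  simp only [Function.comp_apply, toRows₁_fromBlocks_mul, toRows₂_fromBlocks_mul, toRows₂_add]
    at hAV₂ hAU₂ hAV₁₂ hAU₁₂
  simp only [toRows₁_mul, toRows₂_mul, toRows₂_conjTranspose, conjTranspose_zero,
    Matrix.zero_mul, zero_add] at hAV₂ hAU₂ hAV₁₂ hAU₁₂
  have outer := sub_l2_opNorm_mul_max_le_of_coupled hσ hAV₂ hAU₂
  have inner := sub_l2_opNorm_mul_max_le_of_coupled hσ ((add_comm _ _).trans hAV₁₂)
    ((add_comm _ _).trans hAU₁₂)
  have hUV₁ : max ‖V.toRows₁‖ ‖U.toRows₁‖ ≤ 1 :=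
    max_le ((l2_opNorm_toRows₁_le V).trans (l2_opNorm_le_one_of_conjTranspose_mul_self_eq_one hV))
      ((l2_opNorm_toRows₁_le U).trans (l2_opNorm_le_one_of_conjTranspose_mul_self_eq_one hU))
  rw [submatrix_sumElim_inl_inr_eq_fromRows, submatrix_sumElim_inl_inr_eq_fromRows,
    show R.submatrix Sum.inr id = R.toRows₂ from rfl,
    show S.submatrix id Sum.inr = S.toCols₂ from rfl]
  refine (max_l2_opNorm_fromRows_le _ _ _ _).trans (add_le_div_mul_one_add_div hGap hgap
    (le_max_of_le_left (norm_nonneg _)) ?_ ?_)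
  · rw [hGapDef, max_comm ‖R‖]
    exact outer.trans (mul_le_of_le_one_right ((norm_nonneg _).trans (le_max_left _ _)) hUV₁)
  · rw [hgapDef, max_comm ‖U.toRows₂‖]
    exact inner

/-- Theorem 6.1, bound (6.2) of the paper: for the projected SVD setting,
`max(‖[Ũ₂₁;Ũ₃₁]‖, ‖[Ṽ₂₁;Ṽ₃₁]‖) ≤ (max(‖R‖,‖S‖)/Gap)·(1 + max(‖R₂‖,‖S₂‖)/gap)`. -/
theorem svd_subspace_bound
    {m n k₁ km kn : ℕ} (hmn : n ≤ m) (hk₁ : 1 ≤ k₁)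
    (hk₁km : k₁ ≤ km) (hkmm : km ≤ m) (hk₁kn : k₁ ≤ kn) (hknn : kn ≤ n)
    (σ1hat : Fin k₁ → ℝ) (hσ1hat : ∀ i, 0 ≤ σ1hat i)
    (Sig2hat : Matrix (Fin (km - k₁)) (Fin (kn - k₁)) ℂ)
    (hSig2off : ∀ (i : Fin (km - k₁)) (j : Fin (kn - k₁)), (i : ℕ) ≠ (j : ℕ) → Sig2hat i j = 0)
    (hSig2diag : ∀ (i : Fin (km - k₁)) (j : Fin (kn - k₁)), (i : ℕ) = (j : ℕ) →
      ∃ r : ℝ, 0 ≤ r ∧ Sig2hat i j = (r : ℂ))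
    (R : Matrix (Fin k₁ ⊕ Fin (km - k₁)) (Fin (n - kn)) ℂ)
    (S : Matrix (Fin (m - km)) (Fin k₁ ⊕ Fin (kn - k₁)) ℂ)
    (A3 : Matrix (Fin (m - km)) (Fin (n - kn)) ℂ)
    (U : Matrix ((Fin k₁ ⊕ Fin (km - k₁)) ⊕ Fin (m - km)) (Fin k₁) ℂ)
    (V : Matrix ((Fin k₁ ⊕ Fin (kn - k₁)) ⊕ Fin (n - kn)) (Fin k₁) ℂ)
    (hU : Uᴴ * U = 1) (hV : Vᴴ * V = 1)
    (σ1 : Fin k₁ → ℝ) (hσ1 : ∀ i, 0 < σ1 i)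
    (hAV :
      (Matrix.fromBlocks
          (Matrix.fromBlocks (Matrix.diagonal fun i => Complex.ofReal (σ1hat i)) 0 0 Sig2hat)
          R S A3) * V = U * Matrix.diagonal fun i => Complex.ofReal (σ1 i))
    (hAU :
      (Matrix.fromBlocks
          (Matrix.fromBlocks (Matrix.diagonal fun i => Complex.ofReal (σ1hat i)) 0 0 Sig2hat)
          R S A3)ᴴ * U = V * Matrix.diagonal fun i => Complex.ofReal (σ1 i))
    (Gap gap : ℝ)
    (hGapDef : Gap = (⨅ i, σ1 i) - ‖A3‖)
    (hgapDef : gap = (⨅ i, σ1 i) - ‖Sig2hat‖)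
    (hGap : 0 < Gap) (hgap : 0 < gap) :
    max ‖U.submatrix (Sum.elim (fun i => Sum.inl (Sum.inr i)) Sum.inr) id‖
        ‖V.submatrix (Sum.elim (fun i => Sum.inl (Sum.inr i)) Sum.inr) id‖ ≤
      (max ‖R‖ ‖S‖ / Gap) *
        (1 + max ‖R.submatrix Sum.inr id‖ ‖S.submatrix id Sum.inr‖ / gap) :=
  svd_subspace_bound_general σ1hat Sig2hat R S A3 U V hU hV σ1 hAV hAU Gap gap hGapDef hgapDef hGap
    hgap
end

section
/- Let H be a complex Hilbert space, A : H → H a bounded self-adjoint operator, and P₁, P₂, P₃ orthogonal projections with mutually orthogonal ranges satisfying P₁ + P₂ + P₃ = I and P₁ ∘ A ∘ P₂ = 0. Suppose u ∈ H is a unit vector with Au = λu for some real λ, and set uᵢ := Pᵢu. Assume there are constants gap > 0 and Gap such that ‖P₂(Av) − λv‖ ≥ gap·‖v‖ for all v in the range of P₂, and ‖P₃(Av) − λv‖ ≥ Gap·‖v‖ for all v in the range of P₃. Set ‖R₁‖ := ‖P₃ ∘ A ∘ P₁‖ and ‖R₂‖ := ‖P₃ ∘ A ∘ P₂‖ (operator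 norms). If Gap > ‖R₂‖²/gap, then √(‖u₂‖² + ‖u₃‖²) ≤ (‖R₁‖ / (Gap − ‖R₂‖²/gap)) · √(1 + ‖R₂‖²/gap²). -/
/-!
Write `uᵢ = Pᵢ u` and project the eigen-equation `A u = λ u` onto the ranges of `P₂` and `P₃`.
Since `P₁ A P₂ = 0`, self-adjointness gives `P₂ A P₁ = 0`, and `‖P₂ A P₃‖ = ‖P₃ A P₂‖ = ‖R₂‖`; the
gap hypotheses then yield the coupled bounds `gap ‖u₂‖ ≤ ‖R₂‖ ‖u₃‖` and
`Gap ‖u₃‖ ≤ ‖R₁‖ + ‖R₂‖ ‖u₂‖`. Substituting the first into the second bounds `‖u₃‖`, and the first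
again bounds `‖u₂‖² + ‖u₃‖²` by `(1 + ‖R₂‖²/gap²) ‖u₃‖²`.
-/

open ContinuousLinearMap

theorem sqrt_sq_add_sq_le_of_coupled_bounds {x y R r gap Gap : ℝ} (hx : 0 ≤ x) (hy : 0 ≤ y)
    (hr : 0 ≤ r) (hgap : 0 < gap) (hGap : r ^ 2 / gap < Gap)
    (hxy : gap * x ≤ r * y) (hyx : Gap * y ≤ R + r * x) :
    √(x ^ 2 + y ^ 2) ≤ R / (Gap - r ^ 2 / gap) * √(1 + r ^ 2 / gap ^ 2) := by
  have hx' : x ≤ r / gap * y := by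
    rw [div_mul_eq_mul_div, le_div_iff₀ hgap]
    linarith
  have hy' : y ≤ R / (Gap - r ^ 2 / gap) := by
    rw [le_div_iff₀ (by linarith)]
    have hrx : r * x ≤ r ^ 2 / gap * y := by
      calc r * x ≤ r * (r / gap * y) := mul_le_mul_of_nonneg_left hx' hr
        _ = r ^ 2 / gap * y := by ring
    linarith
  have hsq : x ^ 2 + y ^ 2 ≤ (1 + r ^ 2 / gap ^ 2) * y ^ 2 := by
    have : x ^ 2 ≤ (r / gap * y) ^ 2 := pow_le_pow_left₀ hx hx' 2
    linarith [show (r / gap * y) ^ 2 = r ^ 2 / gap ^ 2 * y ^ 2 by ring]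
  calc √(x ^ 2 + y ^ 2) ≤ √((1 + r ^ 2 / gap ^ 2) * y ^ 2) := Real.sqrt_le_sqrt hsq
    _ = y * √(1 + r ^ 2 / gap ^ 2) := by
      rw [Real.sqrt_mul (by positivity), Real.sqrt_sq hy, mul_comm]
    _ ≤ R / (Gap - r ^ 2 / gap) * √(1 + r ^ 2 / gap ^ 2) := by gcongr

section Residual

variable {𝕜 E F : Type*} [NontriviallyNormedField 𝕜] [SeminormedAddCommGroup E] [NormedSpace 𝕜 E]
  [SeminormedAddCommGroup F] [NormedSpace 𝕜 F] {P₁ P₂ P₃ A : E →L[𝕜] E} {u : E} {c : 𝕜}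

theorem apply_sub_smul_eq_of_add_add_eq_one (hsum : P₁ + P₂ + P₃ = 1) (hAu : A u = c • u)
    (T : E →L[𝕜] F) :
    T (A (P₃ u)) - c • T u = -(T (A (P₁ u)) + T (A (P₂ u))) := by
  have h : A (P₁ u) + A (P₂ u) + A (P₃ u) = c • u := by
    rw [← map_add, ← map_add, ← add_apply, ← add_apply, hsum, one_apply_eq_self, hAu]
  have hT := congrArg T h
  simp only [map_add, map_smul] at hT
  rw [← hT]
  abel

theorem norm_apply_sub_smul_le_of_add_add_eq_one (hsum : P₁ + P₂ + P₃ = 1)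
    (hP₂ : P₂ ∘L P₂ = P₂) (hAu : A u = c • u) (T : E →L[𝕜] F) :
    ‖T (A (P₃ u)) - c • T u‖ ≤ ‖T ∘L A ∘L P₁‖ * ‖u‖ + ‖T ∘L A ∘L P₂‖ * ‖P₂ u‖ := by
  have hP₂u : P₂ (P₂ u) = P₂ u := DFunLike.congr_fun hP₂ u
  rw [apply_sub_smul_eq_of_add_add_eq_one hsum hAu T, norm_neg]
  refine (norm_add_le _ _).trans (add_le_add ((T ∘L A ∘L P₁).le_opNorm u) ?_)
  simpa only [comp_apply, hP₂u] using (T ∘L A ∘L P₂).le_opNorm (P₂ u)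

end Residual

namespace IsSelfAdjoint

variable {𝕜 E : Type*} [RCLike 𝕜] [NormedAddCommGroup E] [InnerProductSpace 𝕜 E] [CompleteSpace E]
  {P A Q : E →L[𝕜] E}

theorem adjoint_comp_comp (hP : IsSelfAdjoint P) (hA : IsSelfAdjoint A) (hQ : IsSelfAdjoint Q) :
    adjoint (P ∘L A ∘L Q) = Q ∘L A ∘L P := by
  rw [adjoint_comp, adjoint_comp, hP.adjoint_eq, hA.adjoint_eq, hQ.adjoint_eq, comp_assoc]

theorem comp_comp_eq_zero_comm (hP : IsSelfAdjoint P) (hA : IsSelfAdjoint A)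
    (hQ : IsSelfAdjoint Q) : P ∘L A ∘L Q = 0 ↔ Q ∘L A ∘L P = 0 := by
  constructor <;> intro h
  · rw [← hP.adjoint_comp_comp hA hQ, h, map_zero]
  · rw [← hQ.adjoint_comp_comp hA hP, h, map_zero]

theorem norm_comp_comp_comm (hP : IsSelfAdjoint P) (hA : IsSelfAdjoint A)
    (hQ : IsSelfAdjoint Q) : ‖P ∘L A ∘L Q‖ = ‖Q ∘L A ∘L P‖ := by
  rw [← hQ.adjoint_comp_comp hA hP, LinearIsometryEquiv.norm_map]

end IsSelfAdjoint

theorem selfadjoint_ritz_refined_bound_general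
    {H : Type*} [NormedAddCommGroup H] [InnerProductSpace ℂ H] [CompleteSpace H]
    (A : H →L[ℂ] H) (hA : IsSelfAdjoint A)
    (P₁ P₂ P₃ : H →L[ℂ] H)
    (hP₁sa : IsSelfAdjoint P₁) (hP₂sa : IsSelfAdjoint P₂) (hP₃sa : IsSelfAdjoint P₃)
    (hP₂idem : P₂ ∘L P₂ = P₂) (hP₃idem : P₃ ∘L P₃ = P₃)
    (hsum : P₁ + P₂ + P₃ = 1)
    (hRR : P₁ ∘L A ∘L P₂ = 0)
    (u : H) (hu : ‖u‖ = 1) (lam : ℝ) (hAu : A u = (lam : ℂ) • u)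
    (gap Gap : ℝ) (hgap : 0 < gap)
    (hGap : ‖P₃ ∘L A ∘L P₂‖ ^ 2 / gap < Gap)
    (hgapb : ∀ v ∈ Set.range ⇑P₂, gap * ‖v‖ ≤ ‖P₂ (A v) - (lam : ℂ) • v‖)
    (hGapb : ∀ v ∈ Set.range ⇑P₃, Gap * ‖v‖ ≤ ‖P₃ (A v) - (lam : ℂ) • v‖) :
    Real.sqrt (‖P₂ u‖ ^ 2 + ‖P₃ u‖ ^ 2) ≤
      (‖P₃ ∘L A ∘L P₁‖ / (Gap - ‖P₃ ∘L A ∘L P₂‖ ^ 2 / gap)) *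
        Real.sqrt (1 + ‖P₃ ∘L A ∘L P₂‖ ^ 2 / gap ^ 2) := by
  have hB : gap * ‖P₂ u‖ ≤ ‖P₃ ∘L A ∘L P₂‖ * ‖P₃ u‖ := by
    have hsum' : P₁ + P₃ + P₂ = 1 := by rw [← hsum]; abel
    have h21 : P₂ ∘L A ∘L P₁ = 0 := (hP₁sa.comp_comp_eq_zero_comm hA hP₂sa).mp hRR
    have h := (hgapb _ ⟨u, rfl⟩).trans
      (norm_apply_sub_smul_le_of_add_add_eq_one hsum' hP₃idem hAu P₂)
    rwa [h21, norm_zero, zero_mul, zero_add, hP₂sa.norm_comp_comp_comm hA hP₃sa] at h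
  have hC : Gap * ‖P₃ u‖ ≤ ‖P₃ ∘L A ∘L P₁‖ + ‖P₃ ∘L A ∘L P₂‖ * ‖P₂ u‖ := by
    simpa only [hu, mul_one] using (hGapb _ ⟨u, rfl⟩).trans
      (norm_apply_sub_smul_le_of_add_add_eq_one hsum hP₂idem hAu P₃)
  exact sqrt_sq_add_sq_le_of_coupled_bounds (norm_nonneg _) (norm_nonneg _) (norm_nonneg _)
    hgap hGap hB hC

/-- Theorem 7.1, bound (7.2) of the paper (self-adjoint operator on a Hilbert space):
if `Gap > ‖R₂‖²/gap`, then
`√(‖u₂‖² + ‖u₃‖²) ≤ (‖R₁‖/(Gap − ‖R₂‖²/gap)) · √(1 + ‖R₂‖²/gap²)`. -/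
theorem selfadjoint_ritz_refined_bound
    {H : Type*} [NormedAddCommGroup H] [InnerProductSpace ℂ H] [CompleteSpace H]
    (A : H →L[ℂ] H) (hA : IsSelfAdjoint A)
    (P₁ P₂ P₃ : H →L[ℂ] H)
    (hP₁sa : IsSelfAdjoint P₁) (hP₂sa : IsSelfAdjoint P₂) (hP₃sa : IsSelfAdjoint P₃)
    (hP₁idem : P₁ ∘L P₁ = P₁) (hP₂idem : P₂ ∘L P₂ = P₂) (hP₃idem : P₃ ∘L P₃ = P₃)
    (hP₁₂ : P₁ ∘L P₂ = 0) (hP₁₃ : P₁ ∘L P₃ = 0) (hP₂₃ : P₂ ∘L P₃ = 0)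
    (hsum : P₁ + P₂ + P₃ = 1)
    (hRR : P₁ ∘L A ∘L P₂ = 0)
    (u : H) (hu : ‖u‖ = 1) (lam : ℝ) (hAu : A u = (lam : ℂ) • u)
    (gap Gap : ℝ) (hgap : 0 < gap)
    (hGap : ‖P₃ ∘L A ∘L P₂‖ ^ 2 / gap < Gap)
    (hgapb : ∀ v ∈ Set.range ⇑P₂, gap * ‖v‖ ≤ ‖P₂ (A v) - (lam : ℂ) • v‖)
    (hGapb : ∀ v ∈ Set.range ⇑P₃, Gap * ‖v‖ ≤ ‖P₃ (A v) - (lam : ℂ) • v‖) :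
    Real.sqrt (‖P₂ u‖ ^ 2 + ‖P₃ u‖ ^ 2) ≤
      (‖P₃ ∘L A ∘L P₁‖ / (Gap - ‖P₃ ∘L A ∘L P₂‖ ^ 2 / gap)) *
        Real.sqrt (1 + ‖P₃ ∘L A ∘L P₂‖ ^ 2 / gap ^ 2) :=
  selfadjoint_ritz_refined_bound_general A hA P₁ P₂ P₃ hP₁sa hP₂sa hP₃sa hP₂idem hP₃idem hsum hRR u
    hu lam hAu gap Gap hgap hGap hgapb hGapb
end
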